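/- Let E be an elliptic curve with ordinary reduction over a complete discretely valued field K of characteristic p ≥ 3. The Mazur–Tate sigma function σ = σ_{E,ω} is the unique power series in βz(1 + z·O[[z]]) satisfying σ(pQ) = σ(Q)^{p²} · f_p(Q) for all Q in the formal group Ê(O), where f_p is the p-th division polynomial with respect to ω. -/

import Mathlib

open PowerSeries

/-- Composition `f ∘ g` of power series (substituting `g`, assumed to have zero constant
term, into `f`). -/
noncomputable def pscomp {R : Type*} [CommRing R] (f g : PowerSeries R) : PowerSeries R :=
  PowerSeries.mk fun n =>
    PowerSeries.coeff (R := R) n (Polynomial.eval₂ (PowerSeries.C (R := R)) g (PowerSeries.trunc (n + 1) f))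

/-!
Given two solutions `σ₁, σ₂`, Frobenius in characteristic `p` shows that `δ = σ₁ - σ₂` satisfies
the same equation `X^{p²} · δ([p](X)) = δ^{p²} · g`. Since `[p](X)` starts with a unit times `X^p`,
if `δ` has order `n` the left side has order exactly `p² + n p`, while `g` has order at least `p`
(read off from `σ₁`), so the right side has order at least `p² n + p`. As `σ₁ ≡ σ₂ mod X²` we
have `n ≥ 2`, and then `p² + n p < p² n + p`, a contradiction unless `δ = 0`.
-/

section Composition

variable {R : Type*} [CommRing R]

theorem coeff_pscomp (f g : R⟦X⟧) (k : ℕ) :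
    coeff k (pscomp f g) = ∑ i ∈ Finset.range (k + 1), coeff i f * coeff k (g ^ i) := by
  rw [pscomp, coeff_mk, trunc_apply, Polynomial.eval₂_finsetSum, map_sum, Finset.range_eq_Ico]
  refine Finset.sum_congr rfl fun i _ => ?_
  rw [Polynomial.eval₂_monomial, coeff_C_mul]

theorem pscomp_sub (f₁ f₂ g : R⟦X⟧) : pscomp (f₁ - f₂) g = pscomp f₁ g - pscomp f₂ g := by
  ext k
  simp only [map_sub, coeff_pscomp, sub_mul, Finset.sum_sub_distrib]

theorem coeff_pow_of_X_pow_dvd {g : R⟦X⟧} {P : ℕ} (hg : X ^ P ∣ g) (n : ℕ) :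
    coeff (n * P) (g ^ n) = coeff P g ^ n := by
  obtain ⟨h, rfl⟩ := hg
  have hP : coeff P (X ^ P * h) = constantCoeff h := by
    simpa using coeff_X_pow_mul h P 0
  have hn : coeff (n * P) ((X ^ P * h) ^ n) = constantCoeff (h ^ n) := by
    simpa [mul_pow, ← pow_mul, mul_comm P n] using coeff_X_pow_mul (h ^ n) (n * P) 0
  rw [hP, hn, map_pow]

theorem coeff_pow_eq_zero_of_X_pow_dvd {g : R⟦X⟧} {P : ℕ} (hg : X ^ P ∣ g) {i k : ℕ}
    (hk : k < i * P) : coeff k (g ^ i) = 0 :=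
  X_pow_dvd_iff.1 (by simpa [pow_mul, mul_comm i P] using pow_dvd_pow_of_dvd hg i) k hk

theorem X_pow_mul_dvd_pscomp {f g : R⟦X⟧} {n P : ℕ} (hf : X ^ n ∣ f) (hg : X ^ P ∣ g) :
    X ^ (n * P) ∣ pscomp f g := by
  refine X_pow_dvd_iff.2 fun k hk => ?_
  rw [coeff_pscomp]
  refine Finset.sum_eq_zero fun i _ => ?_
  rcases lt_or_ge i n with hi | hi
  · rw [X_pow_dvd_iff.1 hf i hi, zero_mul]
  · rw [coeff_pow_eq_zero_of_X_pow_dvd hg (hk.trans_le (Nat.mul_le_mul_right P hi)), mul_zero]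

theorem coeff_pscomp_of_X_pow_dvd {f g : R⟦X⟧} {n P : ℕ} (hP : 0 < P) (hf : X ^ n ∣ f)
    (hg : X ^ P ∣ g) : coeff (n * P) (pscomp f g) = coeff n f * coeff P g ^ n := by
  rw [coeff_pscomp, Finset.sum_eq_single n, coeff_pow_of_X_pow_dvd hg]
  · intro i _ hin
    rcases lt_or_gt_of_ne hin with hi | hi
    · rw [X_pow_dvd_iff.1 hf i hi, zero_mul]
    · rw [coeff_pow_eq_zero_of_X_pow_dvd hg (Nat.mul_lt_mul_of_pos_right hi hP), mul_zero]
  · intro hn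
    exact absurd (Finset.mem_range.2 (Nat.lt_succ_of_le (Nat.le_mul_of_pos_right n hP))) hn

end Composition

section FunctionalEquation

variable {R : Type*} [CommRing R] {φ g : R⟦X⟧} {m P : ℕ}

theorem pscomp_sub_eq_of_frobenius {p : ℕ} [Fact p.Prime] [CharP R p] {k : ℕ} {σ₁ σ₂ : R⟦X⟧}
    (h₁ : X ^ (p ^ k) * pscomp σ₁ φ = σ₁ ^ (p ^ k) * g)
    (h₂ : X ^ (p ^ k) * pscomp σ₂ φ = σ₂ ^ (p ^ k) * g) :
    X ^ (p ^ k) * pscomp (σ₁ - σ₂) φ = (σ₁ - σ₂) ^ (p ^ k) * g := by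
  have : CharP R⟦X⟧ p := charP_of_injective_ringHom C_injective p
  rw [pscomp_sub, mul_sub, h₁, h₂, sub_pow_char_pow, sub_mul]

theorem X_pow_dvd_of_pscomp_eq {σ : R⟦X⟧} (hσ0 : constantCoeff σ = 0)
    (hσ1 : IsUnit (coeff 1 σ)) (hφ : X ^ P ∣ φ) (h : X ^ m * pscomp σ φ = σ ^ m * g) :
    X ^ P ∣ g := by
  obtain ⟨u, rfl⟩ := X_dvd_iff.2 hσ0
  have hu : IsUnit u := isUnit_iff_constantCoeff.2 (by simpa using hσ1)
  rw [mul_pow, mul_assoc] at h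
  rw [← (hu.pow m).dvd_mul_left, ← X_pow_mul_cancel h]
  simpa using X_pow_mul_dvd_pscomp (n := 1) (by rw [pow_one]; exact dvd_mul_right X u) hφ

theorem coeff_eq_zero_of_pscomp_eq {δ : R⟦X⟧} {n : ℕ} (hP : 0 < P) (hPm : P < m) (hn : 2 ≤ n)
    (hφ : X ^ P ∣ φ) (hφP : IsUnit (coeff P φ)) (hg : X ^ P ∣ g) (hδ : X ^ n ∣ δ)
    (h : X ^ m * pscomp δ φ = δ ^ m * g) : coeff n δ = 0 := by
  have hlhs : coeff (n * P + m) (X ^ m * pscomp δ φ) = coeff n δ * coeff P φ ^ n := by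
    rw [coeff_X_pow_mul, coeff_pscomp_of_X_pow_dvd hP hδ hφ]
  have hrhs : X ^ (n * m + P) ∣ δ ^ m * g := by
    rw [pow_add, pow_mul]
    exact mul_dvd_mul (pow_dvd_pow_of_dvd hδ m) hg
  have hlt : n * P + m < n * m + P := by nlinarith
  rw [← (hφP.pow n).mul_left_eq_zero, ← hlhs, h]
  exact X_pow_dvd_iff.1 hrhs _ hlt

theorem eq_zero_of_pscomp_eq {δ : R⟦X⟧} (hP : 0 < P) (hPm : P < m) (hφ : X ^ P ∣ φ)
    (hφP : IsUnit (coeff P φ)) (hg : X ^ P ∣ g) (hδ0 : coeff 0 δ = 0) (hδ1 : coeff 1 δ = 0)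
    (h : X ^ m * pscomp δ φ = δ ^ m * g) : δ = 0 := by
  by_contra hne
  have hn : 2 ≤ δ.order.toNat := by
    by_contra hlt
    interval_cases hn : δ.order.toNat
    · exact coeff_order hne (hn ▸ hδ0)
    · exact coeff_order hne (hn ▸ hδ1)
  exact coeff_order hne (coeff_eq_zero_of_pscomp_eq hP hPm hn hφ hφP hg X_pow_order_dvd h)

end FunctionalEquation

theorem mazur_tate_sigma_unique_general {p : ℕ} (hp : p.Prime)
    {O : Type*} [CommRing O] [CharP O p]
    (β : Oˣ) (mulp g : PowerSeries O)
    (hmul0 : PowerSeries.constantCoeff (R := O) mulp = 0)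
    (hmulform : ∀ j : ℕ, ¬ p ∣ j → PowerSeries.coeff (R := O) j mulp = 0)
    (hord : IsUnit (PowerSeries.coeff (R := O) p mulp))
    (σ₁ σ₂ : PowerSeries O)
    (h₁0 : PowerSeries.constantCoeff (R := O) σ₁ = 0)
    (h₁1 : PowerSeries.coeff (R := O) 1 σ₁ = β)
    (h₁ : PowerSeries.X ^ (p ^ 2) * pscomp σ₁ mulp = σ₁ ^ (p ^ 2) * g)
    (h₂0 : PowerSeries.constantCoeff (R := O) σ₂ = 0)
    (h₂1 : PowerSeries.coeff (R := O) 1 σ₂ = β)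
    (h₂ : PowerSeries.X ^ (p ^ 2) * pscomp σ₂ mulp = σ₂ ^ (p ^ 2) * g) :
    σ₁ = σ₂ := by
  have : Fact p.Prime := ⟨hp⟩
  have hmul : X ^ p ∣ mulp := X_pow_dvd_iff.2 fun j hj => by
    rcases Nat.eq_zero_or_pos j with rfl | hj0
    · rwa [coeff_zero_eq_constantCoeff_apply]
    · exact hmulform j (Nat.not_dvd_of_pos_of_lt hj0 hj)
  have hg : X ^ p ∣ g := X_pow_dvd_of_pscomp_eq h₁0 (h₁1 ▸ β.isUnit) hmul h₁
  have hpp : p < p ^ 2 := by nlinarith [hp.one_lt]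
  refine sub_eq_zero.1 (eq_zero_of_pscomp_eq hp.pos hpp hmul hord hg ?_ ?_
    (pscomp_sub_eq_of_frobenius h₁ h₂))
  · rw [map_sub, coeff_zero_eq_constantCoeff_apply, coeff_zero_eq_constantCoeff_apply, h₁0, h₂0,
      sub_self]
  · rw [map_sub, h₁1, h₂1, sub_self]

/-- **Mazur–Tate.** Let `K` be a complete discretely valued field with
valuation ring `O` of characteristic `p ≥ 3`, `E/K` an elliptic curve with ordinary
reduction, `ω` an invariant differential, `z` a formal parameter and `β = (ω/dz)(O)` (a
unit).  The multiplication-by-`p` series `[p](z) = mulp` lies in `O[[z^p]]`, has zero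
constant term, and (ordinarity/height one) unit coefficient in degree `p`.  The `p`-th
division polynomial `f_p` is encoded by `g = z^{p²}·f_p ∈ O[[z]]`.  Then the Mazur–Tate
sigma function is the *unique* power series `σ ∈ βz(1 + z·O[[z]])` (i.e. with
`σ ≡ βz mod z²`) satisfying `σ([p](z)) = σ(z)^{p²}·f_p(z)`, i.e. after clearing
denominators `z^{p²}·σ([p](z)) = σ(z)^{p²}·g`: any two such series are equal. -/
theorem mazur_tate_sigma_unique {p : ℕ} (hp : p.Prime) (hp3 : 3 ≤ p)
    {O : Type*} [CommRing O] [IsDomain O] [CharP O p]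
    (β : Oˣ) (mulp g : PowerSeries O)
    (hmul0 : PowerSeries.constantCoeff (R := O) mulp = 0)
    (hmulform : ∀ j : ℕ, ¬ p ∣ j → PowerSeries.coeff (R := O) j mulp = 0)
    (hord : IsUnit (PowerSeries.coeff (R := O) p mulp))
    (σ₁ σ₂ : PowerSeries O)
    (h₁0 : PowerSeries.constantCoeff (R := O) σ₁ = 0)
    (h₁1 : PowerSeries.coeff (R := O) 1 σ₁ = β)
    (h₁ : PowerSeries.X ^ (p ^ 2) * pscomp σ₁ mulp = σ₁ ^ (p ^ 2) * g)
    (h₂0 : PowerSeries.constantCoeff (R := O) σ₂ = 0)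
    (h₂1 : PowerSeries.coeff (R := O) 1 σ₂ = β)
    (h₂ : PowerSeries.X ^ (p ^ 2) * pscomp σ₂ mulp = σ₂ ^ (p ^ 2) * g) :
    σ₁ = σ₂ :=
  mazur_tate_sigma_unique_general hp β mulp g hmul0 hmulform hord σ₁ σ₂ h₁0 h₁1 h₁ h₂0 h₂1 h₂
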